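/- arXiv:1904.03395 — 3 statements merged into one kernel-verified Lean document; each statement's English description precedes it below -/
import Mathlib

section
/- For each integer d ≥ 2, the set of prime numbers p such that p divides H_d(n) for some n ∈ ℕ is infinite. -/
/-!
Suppose only finitely many primes divide values of `H_d`. Modulo a prime `r < d` every value is
`1`, since in the recurrence `H_d(m + d) = H_d(m + d - 1) + (m + 1) ⋯ (m + d - 1) · H_d(m)` the
coefficient is divisible by `(d - 1)!`; modulo a prime `p > d` the sequence is `p`-periodic, and
`H_d(j) = 1` for `j < d`. So if `n` is divisible by every prime `p > d` dividing some value, then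
`H_d(n)` and `H_d(n + 1)` are powers of `d`, and the recurrence turns into
`d^a (d^s - 1) = n (n - 1) ⋯ (n - d + 2) · H_d(n + 1 - d)`: thus `n ∣ d^s - 1` and
`d^s ≤ 1 + n^(d - 1)`. For `n = q^M · P` with a prime `q > d`, lifting the exponent gives
`q^M ∣ (d^(q - 1) - 1) · s`, so `s` grows exponentially in `M`, while `d^s ≤ 1 + n^(d - 1)`
keeps it linear in `M`.
-/

/-- `Hd d n` is the number of permutations of an `n`-element set that are products of
pairwise disjoint cycles of length `d`, given by the explicit formula
`H_d(n) = Σ_{k=0}^{⌊n/d⌋} n!/((n−dk)!·k!·d^k)` (each summand is an integer, so the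
natural-number division below is exact). -/
def Hd (d n : ℕ) : ℕ :=
  ∑ k ∈ Finset.range (n / d + 1),
    Nat.factorial n / (Nat.factorial (n - d * k) * Nat.factorial k * d ^ k)

open Finset Nat

/-- The number of permutations of a `d * k`-set that are products of `k` disjoint `d`-cycles. -/
def cycleCount (d : ℕ) : ℕ → ℕ
  | 0 => 1
  | k + 1 => cycleCount d k * (d * k + 1).ascFactorial (d - 1)

lemma cycleCount_mul_factorial_mul_pow {d : ℕ} (hd : 0 < d) (k : ℕ) :
    cycleCount d k * (k ! * d ^ k) = (d * k)! := by
  induction k with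
  | zero => simp [cycleCount]
  | succ k ih =>
    have hk : d * (k + 1) = d * k + (d - 1) + 1 := by rw [mul_add_one]; omega
    calc cycleCount d (k + 1) * ((k + 1)! * d ^ (k + 1))
        = (d * k + (d - 1) + 1) * (cycleCount d k * (k ! * d ^ k)
            * (d * k + 1).ascFactorial (d - 1)) := by
          rw [cycleCount, factorial_succ, pow_succ, ← hk]; ring
      _ = (d * (k + 1))! := by
          rw [ih, factorial_mul_ascFactorial, hk, factorial_succ]

lemma choose_add_mul_ascFactorial (m j e : ℕ) :
    (m + e).choose (j + e) * (j + 1).ascFactorial e = (m + 1).ascFactorial e * m.choose j := by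
  rw [ascFactorial_eq_factorial_mul_choose, ascFactorial_eq_factorial_mul_choose,
    mul_left_comm, choose_mul (le_add_left e j)]
  simp only [Nat.add_sub_cancel]
  ring

lemma Hd_eq_sum {d n K : ℕ} (hd : 0 < d) (hK : n / d < K) :
    Hd d n = ∑ k ∈ range K, n.choose (d * k) * cycleCount d k := by
  have hterm : ∀ k ∈ range (n / d + 1), n ! / ((n - d * k)! * k ! * d ^ k)
      = n.choose (d * k) * cycleCount d k := by
    intro k hk
    have hdk : d * k ≤ n := by
      rw [mul_comm, ← Nat.le_div_iff_mul_le hd]; exact Nat.lt_succ_iff.1 (mem_range.1 hk)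
    refine Nat.div_eq_of_eq_mul_left (by positivity) ?_
    rw [← choose_mul_factorial_mul_factorial hdk, ← cycleCount_mul_factorial_mul_pow hd]
    ring
  rw [Hd, sum_congr rfl hterm]
  refine sum_subset (range_subset_range.2 hK) fun k _ hk => ?_
  rw [mem_range, not_lt] at hk
  rw [choose_eq_zero_of_lt, zero_mul]
  rw [mul_comm, ← Nat.div_lt_iff_lt_mul hd]
  omega

lemma Hd_add_self {d : ℕ} (hd : 0 < d) (m : ℕ) :
    Hd d (m + d) = Hd d (m + (d - 1)) + (m + 1).ascFactorial (d - 1) * Hd d m := by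
  obtain ⟨e, rfl⟩ : ∃ e, d = e + 1 := ⟨d - 1, by omega⟩
  simp only [Nat.add_sub_cancel]
  have hdiv : m / (e + 1) ≤ m := Nat.div_le_self m _
  have hsucc : (m + e + 1) / (e + 1) = m / (e + 1) + 1 := Nat.add_div_right m hd
  have hle : (m + e) / (e + 1) ≤ (m + e + 1) / (e + 1) := Nat.div_le_div_right (by omega)
  have hterm : ∀ k, (m + e + 1).choose ((e + 1) * (k + 1)) * cycleCount (e + 1) (k + 1)
      = (m + e).choose ((e + 1) * (k + 1)) * cycleCount (e + 1) (k + 1)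
        + (m + 1).ascFactorial e * (m.choose ((e + 1) * k) * cycleCount (e + 1) k) := by
    intro k
    rw [show (e + 1) * (k + 1) = (e + 1) * k + e + 1 by ring, choose_succ_succ', add_mul,
      add_comm]
    congr 1
    rw [cycleCount, add_tsub_cancel_right, mul_left_comm, choose_add_mul_ascFactorial]
    ring
  rw [show m + (e + 1) = m + e + 1 by ring, Hd_eq_sum hd (K := m + 2) (by omega),
    Hd_eq_sum hd (K := m + 2) (by omega), Hd_eq_sum hd (K := m + 1) (by omega),
    sum_range_succ' _ (m + 1), sum_range_succ' _ (m + 1), sum_congr rfl fun k _ => hterm k,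
    sum_add_distrib, mul_sum]
  simp only [mul_zero, choose_zero_right]
  ring

lemma Hd_of_lt {d n : ℕ} (h : n < d) : Hd d n = 1 := by
  simp [Hd, Nat.div_eq_of_lt h, Nat.div_self (factorial_pos n)]

lemma Hd_pos {d : ℕ} (hd : 0 < d) (n : ℕ) : 0 < Hd d n := by
  rw [Hd_eq_sum hd (lt_add_one _), sum_range_succ']
  simp [cycleCount]

lemma Hd_mono {d : ℕ} (hd : 0 < d) : Monotone (Hd d) := by
  refine monotone_nat_of_le_succ fun n => ?_
  rcases lt_or_ge (n + 1) d with h | h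
  · rw [Hd_of_lt h, Hd_of_lt (by omega)]
  · obtain ⟨m, hm⟩ := Nat.exists_eq_add_of_le' h
    rw [hm, Hd_add_self hd, show m + (d - 1) = n by omega]
    exact le_add_right le_rfl

lemma dvd_ascFactorial_of_le_of_lt {a n k : ℕ} (h₁ : n ≤ a) (h₂ : a < n + k) :
    a ∣ n.ascFactorial k := by
  rw [ascFactorial_eq_prod_range]
  simpa [Nat.add_sub_cancel' h₁] using
    dvd_prod_of_mem (n + ·) (mem_range.2 (by omega : a - n < k))

lemma ascFactorial_add_modEq (n p k : ℕ) :
    (n + p).ascFactorial k ≡ n.ascFactorial k [MOD p] := by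
  induction k with
  | zero => rfl
  | succ k ih =>
    rw [ascFactorial_succ, ascFactorial_succ, add_right_comm]
    exact (Nat.add_modulus_modEq_iff.2 rfl).mul ih

lemma Hd_modEq_one {d : ℕ} (hd : 0 < d) (n : ℕ) : Hd d n ≡ 1 [MOD (d - 1)!] := by
  induction n using Nat.strong_induction_on with
  | _ n ih =>
  rcases lt_or_ge n d with h | h
  · rw [Hd_of_lt h]
  · obtain ⟨m, rfl⟩ := Nat.exists_eq_add_of_le' h
    have hF := Nat.modEq_zero_iff_dvd.2 (factorial_dvd_ascFactorial (m + 1) (d - 1))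
    rw [Hd_add_self hd]
    simpa using (ih _ (by omega)).add (hF.mul_right (Hd d m))

lemma Hd_prime_modEq_one {d p : ℕ} (hd : 0 < d) (hp : p.Prime) (hdp : ¬ d ∣ p) :
    Hd d p ≡ 1 [MOD p] := by
  have hterm : ∀ k ∈ range (p / d), p ∣ p.choose (d * (k + 1)) * cycleCount d (k + 1) := by
    intro k hk
    have hle : d * (k + 1) ≤ p := by
      rw [mul_comm, ← Nat.le_div_iff_mul_le hd]; exact mem_range.1 hk
    have hne : d * (k + 1) ≠ p := fun h => hdp (h ▸ dvd_mul_right d _)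
    exact (hp.dvd_choose_self (by positivity) (lt_of_le_of_ne hle hne)).mul_right _
  rw [Hd_eq_sum hd (lt_add_one _), sum_range_succ']
  simpa [cycleCount] using (Nat.modEq_zero_iff_dvd.2 (dvd_sum hterm)).add_right 1

lemma Hd_add_prime_modEq {d p : ℕ} (hd : 2 ≤ d) (hp : p.Prime) (hdp : d < p) (n : ℕ) :
    Hd d (n + p) ≡ Hd d n [MOD p] := by
  induction n using Nat.strong_induction_on with
  | _ n ih =>
  rcases n with _ | n
  · rw [zero_add, Hd_of_lt (show 0 < d by omega)]
    refine Hd_prime_modEq_one (d := d) (by omega) hp fun h => ?_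
    rcases hp.eq_one_or_self_of_dvd d h with h | h <;> omega
  obtain ⟨m, hm⟩ : ∃ m, n + 1 + p = m + d := ⟨n + 1 + p - d, by omega⟩
  rw [hm, Hd_add_self (by omega), show m + (d - 1) = n + p by omega]
  rcases lt_or_ge (n + 1) d with hn | hn
  · -- `p` is one of the factors `n + p - d + 2, …, n + p` of the coefficient
    have hF : p ∣ (m + 1).ascFactorial (d - 1) :=
      dvd_ascFactorial_of_le_of_lt (n := m + 1) (by omega) (by omega)
    rw [Hd_of_lt hn]
    simpa [Hd_of_lt (show n < d by omega)] using
      (ih n (by omega)).add ((Nat.modEq_zero_iff_dvd.2 hF).mul_right (Hd d m))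
  · obtain ⟨m', hm'⟩ : ∃ m', n + 1 = m' + d := ⟨n + 1 - d, by omega⟩
    rw [hm', Hd_add_self (by omega), show m' + (d - 1) = n by omega, show m = m' + p by omega,
      add_right_comm]
    exact (ih n (by omega)).add ((ascFactorial_add_modEq _ _ _).mul (ih m' (by omega)))

lemma Hd_add_mul_prime_modEq {d p : ℕ} (hd : 2 ≤ d) (hp : p.Prime) (hdp : d < p) (n k : ℕ) :
    Hd d (n + p * k) ≡ Hd d n [MOD p] := by
  induction k with
  | zero => rfl
  | succ k ih => rw [mul_add_one, ← add_assoc]; exact (Hd_add_prime_modEq hd hp hdp _).trans ih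

lemma exists_Hd_add_eq_pow {d n i : ℕ} (hd : 2 ≤ d)
    (hn : ∀ p, p.Prime → d < p → (∃ k, p ∣ Hd d k) → p ∣ n) (hi : i < d) :
    ∃ a, Hd d (n + i) = d ^ a := by
  refine ⟨_, eq_prime_pow_of_unique_prime_dvd (Hd_pos (d := d) (by omega) _).ne'
    fun {r} hr hrH => ?_⟩
  have hone : ¬ Hd d (n + i) ≡ 1 [MOD r] := fun h => hr.one_lt.ne'
    (Nat.dvd_one.1 (Nat.modEq_zero_iff_dvd.1 (h.symm.trans (Nat.modEq_zero_iff_dvd.2 hrH))))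
  rcases lt_trichotomy r d with hrd | hrd | hrd
  · exact absurd ((Hd_modEq_one (by omega) _).of_dvd (dvd_factorial hr.pos (by omega))) hone
  · exact hrd
  · obtain ⟨k, rfl⟩ := hn r hr hrd ⟨_, hrH⟩
    refine absurd ?_ hone
    rw [add_comm, ← Hd_of_lt hi]
    exact Hd_add_mul_prime_modEq hd hr hrd i k

lemma exists_dvd_pow_sub_one_of_Hd_eq_pow {d n a b : ℕ} (hd : 2 ≤ d) (hn : d ≤ n)
    (hcop : n.Coprime d) (ha : Hd d n = d ^ a) (hb : Hd d (n + 1) = d ^ b) :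
    ∃ s, 0 < s ∧ n ∣ d ^ s - 1 ∧ d ^ s ≤ 1 + n ^ (d - 1) := by
  obtain ⟨m, hm⟩ : ∃ m, n + 1 = m + d := ⟨n + 1 - d, by omega⟩
  have hrec := Hd_add_self (by omega : 0 < d) m
  rw [← hm, show m + (d - 1) = n by omega, ha, hb] at hrec
  set F := (m + 1).ascFactorial (d - 1)
  have hFH : 0 < F * Hd d m := mul_pos (ascFactorial_pos _ _) (Hd_pos (by omega) _)
  have hab : a < b := (Nat.pow_lt_pow_iff_right (by omega)).1 (show d ^ a < d ^ b by omega)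
  have hsplit : d ^ a * d ^ (b - a) = d ^ a + F * Hd d m := by
    rw [← pow_add, Nat.add_sub_cancel' hab.le, hrec]
  refine ⟨b - a, by omega, ?_, ?_⟩
  · have hnF : n ∣ F := dvd_ascFactorial_of_le_of_lt (n := m + 1) (by omega) (by omega)
    refine (hcop.pow_right a).dvd_of_dvd_mul_left ?_
    rw [Nat.mul_sub_one, hsplit, Nat.add_sub_cancel_left]
    exact hnF.mul_right _
  · have hHm : Hd d m ≤ d ^ a := ha ▸ Hd_mono (by omega) (by omega : m ≤ n)
    have hF : F ≤ n ^ (d - 1) := by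
      simpa [show m + (d - 1) = n by omega] using ascFactorial_le_pow_add m (d - 1)
    have : d ^ a * d ^ (b - a) ≤ d ^ a * (1 + F) := by
      calc d ^ a * d ^ (b - a) = d ^ a + F * Hd d m := hsplit
        _ ≤ d ^ a + F * d ^ a := by gcongr
        _ = d ^ a * (1 + F) := by ring
    have := Nat.le_of_mul_le_mul_left this (by positivity)
    omega

lemma pow_dvd_mul_of_pow_dvd_pow_sub_one {q d s M : ℕ} (hq : q.Prime) (hq2 : q ≠ 2)
    (hqd : ¬ q ∣ d) (h : q ^ M ∣ d ^ s - 1) : q ^ M ∣ (d ^ (q - 1) - 1) * s := by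
  have hfermat : q ∣ d ^ (q - 1) - 1 := by
    have := Nat.ModEq.pow_totient (hq.coprime_iff_not_dvd.2 hqd).symm
    rw [totient_prime hq] at this
    exact this.symm.dvd'
  have h' : q ^ M ∣ (d ^ (q - 1)) ^ s - 1 ^ s := by
    refine h.trans ?_
    rw [← pow_mul, mul_comm, pow_mul]
    simpa using Nat.sub_dvd_pow_sub_pow (d ^ s) 1 (q - 1)
  rw [pow_dvd_iff_le_emultiplicity] at h' ⊢
  rwa [Nat.emultiplicity_pow_sub_pow hq (hq.odd_of_ne_two hq2) hfermat
    fun h => hqd (hq.dvd_of_dvd_pow h), ← hq.emultiplicity_mul] at h'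

lemma exists_mul_add_lt_pow {q : ℕ} (hq : 2 ≤ q) (a b : ℕ) :
    ∃ u, 0 < u ∧ a * u + b < q ^ u := by
  have hw : 2 * a + b + 1 < q ^ (2 * a + b + 1) := Nat.lt_pow_self hq
  refine ⟨2 * (2 * a + b + 1), by omega, ?_⟩
  rw [pow_mul', sq]
  nlinarith

lemma le_mul_add_one_of_pow_le {d s n k L : ℕ} (hd : 2 ≤ d) (hs : d ^ s ≤ 1 + n ^ k)
    (hn : n ≤ 2 ^ L) : s ≤ k * L + 1 := by
  refine (Nat.pow_le_pow_iff_right (le_refl 2)).1 ?_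
  calc 2 ^ s ≤ d ^ s := Nat.pow_le_pow_left hd s
    _ ≤ 1 + n ^ k := hs
    _ ≤ 2 ^ (k * L) + 2 ^ (k * L) :=
        Nat.add_le_add Nat.one_le_two_pow (by rw [pow_mul']; exact Nat.pow_le_pow_left hn k)
    _ = 2 ^ (k * L + 1) := by ring

lemma pow_mul_le_two_pow (q M P : ℕ) : q ^ M * P ≤ 2 ^ (q * M + P) := by
  rw [pow_add, pow_mul]
  exact Nat.mul_le_mul (Nat.pow_le_pow_left Nat.lt_two_pow_self.le M) Nat.lt_two_pow_self.le

theorem stmt14 (d : ℕ) (hd : 2 ≤ d) :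
    {p : ℕ | p.Prime ∧ ∃ n : ℕ, p ∣ Hd d n}.Infinite := by
  intro hfin
  obtain ⟨q, hdq, hq⟩ := Nat.exists_infinite_primes (d + 1)
  have hqd : ¬ q ∣ d := Nat.not_dvd_of_pos_of_lt (by omega) (by omega)
  set P := ∏ p ∈ hfin.toFinset with d < p, p
  set D := d ^ (q - 1) - 1
  have hD : 0 < D := Nat.sub_pos_of_lt (Nat.one_lt_pow (by omega) (by omega))
  obtain ⟨M, hM0, hM⟩ :=
    exists_mul_add_lt_pow hq.two_le (D * (d - 1) * q) (D * ((d - 1) * P + 1))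
  set n := q ^ M * P
  have hPpos : 0 < P := prod_pos fun p hp => (hfin.mem_toFinset.1 (mem_filter.1 hp).1).1.pos
  have hdn : d ≤ n :=
    (Nat.le_self_pow hM0.ne' q).trans' (by omega) |>.trans (Nat.le_mul_of_pos_right _ hPpos)
  have hcop : n.Coprime d := by
    refine ((hq.coprime_iff_not_dvd.2 hqd).pow_left M).mul_left
      (Nat.Coprime.prod_left fun p hp => ?_)
    obtain ⟨hpS, hdp⟩ := mem_filter.1 hp
    exact (hfin.mem_toFinset.1 hpS).1.coprime_iff_not_dvd.2
      (Nat.not_dvd_of_pos_of_lt (by omega) hdp)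
  have hdiv : ∀ p, p.Prime → d < p → (∃ k, p ∣ Hd d k) → p ∣ n := fun p hp hdp hk =>
    (dvd_prod_of_mem _ (mem_filter.2 ⟨hfin.mem_toFinset.2 ⟨hp, hk⟩, hdp⟩)).mul_left _
  obtain ⟨a, ha⟩ := exists_Hd_add_eq_pow hd hdiv (by omega : 0 < d)
  obtain ⟨b, hb⟩ := exists_Hd_add_eq_pow hd hdiv (by omega : 1 < d)
  obtain ⟨s, hs0, hns, hsize⟩ := exists_dvd_pow_sub_one_of_Hd_eq_pow hd hdn hcop ha hb
  have hqM : q ^ M ∣ D * s :=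
    pow_dvd_mul_of_pow_dvd_pow_sub_one hq (by omega) hqd ((dvd_mul_right _ _).trans hns)
  refine absurd hM (not_lt.2 ?_)
  calc q ^ M ≤ D * s := Nat.le_of_dvd (Nat.mul_pos hD hs0) hqM
    _ ≤ D * ((d - 1) * (q * M + P) + 1) :=
        Nat.mul_le_mul_left D (le_mul_add_one_of_pow_le hd hsize (pow_mul_le_two_pow q M P))
    _ = D * (d - 1) * q * M + D * ((d - 1) * P + 1) := by ring
end

section
/- Let d ≥ 3 be an integer. Then (2d+1) | H_d(3d+2) if and only if (2d+1) | d! − 1. If additionally d is odd, then: (2d+1) | H_{2d+1}(3d+2) if and only if (2d+1) | (d!)² − 1; (2d+1) | H_d(4d) if and only if (2d+1) | d! + 1; and (2d+1) | H_{2d+1}(4d) if and only if (2d+1) | (d!)² − 1. -/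
/-
Write `m = 2d + 1` and `T_k = n! / ((n - dk)! k! d^k)` for the summands of `H_d(n)`, so that
`T_k · k! · d^k = n (n - 1) ⋯ (n - dk + 1)`. Since `m` need not be prime, `k!` cannot be cancelled
modulo `m`; instead, for `n ∈ {3d + 2, 4d}` and `k ≥ 2` the `dk` consecutive integers ending
at `n` contain `m` and, above it, at least `k` consecutive integers, whose product absorbs `k!`.
As `m` is coprime to `d`, this gives `m ∣ T_k`, and for cycle length `m` only `k ≤ 1` occurs.
Hence `H ≡ 1 + T_1 (mod m)`, and `T_1` is evaluated using `2d ≡ -1`: a falling factorial at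
`a ≡ -b` is `(-1)^k` times a rising factorial at `b`. This yields `H_d(3d + 2) ≡ 1 - d!`,
`H_d(4d) ≡ 1 - (-1)^d d!` and `H_m(n) ≡ 1 + (2d)! ≡ 1 + (-1)^d (d!)²` for `m ≤ n < 2m`.
-/

open Finset Nat

theorem Nat.descFactorial_dvd_descFactorial (n : ℕ) {k K : ℕ} (h : k ≤ K) :
    n.descFactorial k ∣ n.descFactorial K :=
  Dvd.intro_left _ (descFactorial_mul_descFactorial h)

theorem Nat.mul_factorial_dvd_descFactorial {m n k K : ℕ} (hm : m ≤ n) (hk : k ≤ n - m)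
    (hK : n - m < K) : m * k ! ∣ n.descFactorial K := by
  have hsucc : n.descFactorial (n - m + 1) = m * n.descFactorial (n - m) := by
    rw [descFactorial_succ, Nat.sub_sub_self hm]
  calc m * k ! ∣ m * n.descFactorial (n - m) :=
        mul_dvd_mul_left m ((factorial_dvd_descFactorial n k).trans
          (n.descFactorial_dvd_descFactorial hk))
    _ = n.descFactorial (n - m + 1) := hsucc.symm
    _ ∣ n.descFactorial K := n.descFactorial_dvd_descFactorial hK

section Cast

variable {R : Type*} [CommRing R]

theorem Nat.cast_descFactorial_eq_of_cast_eq {a b : ℕ} (h : (a : R) = b) (k : ℕ) :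
    (a.descFactorial k : R) = b.descFactorial k := by
  rw [← descPochhammer_eval_eq_descFactorial, h, descPochhammer_eval_eq_descFactorial]

theorem Nat.cast_descFactorial_eq_of_cast_eq_neg {a b : ℕ} (h : (a : R) = -b) (k : ℕ) :
    (a.descFactorial k : R) = (-1) ^ k * b.ascFactorial k := by
  have hasc := ascPochhammer_eval_neg_eq_descPochhammer R (-(b : R)) k
  rw [neg_neg, ← cast_ascFactorial] at hasc
  rw [← descPochhammer_eval_eq_descFactorial, h, hasc, ← mul_assoc, ← mul_pow]
  simp

end Cast

def HdTerm (d n k : ℕ) : ℕ := n ! / ((n - d * k)! * k ! * d ^ k)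

theorem Hd_eq_sum_HdTerm (d n : ℕ) : Hd d n = ∑ k ∈ range (n / d + 1), HdTerm d n k := rfl

theorem HdTerm_zero (d n : ℕ) : HdTerm d n 0 = 1 := by
  simp [HdTerm, Nat.div_self n.factorial_pos]

theorem Nat.factorial_mul_pow_dvd_factorial_mul {d : ℕ} (hd : d ≠ 0) (k : ℕ) :
    k ! * d ^ k ∣ (d * k)! := by
  calc k ! * d ^ k ∣ k ! * d ! ^ k :=
        mul_dvd_mul_left _ (pow_dvd_pow_of_dvd (dvd_factorial (pos_of_ne_zero hd) le_rfl) k)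
    _ ∣ (d * k)! := Dvd.intro_left (uniformBell k d) (by
        rw [← mul_assoc, mul_right_comm, uniformBell_mul_eq k hd, mul_comm])

theorem HdTerm_mul_eq_descFactorial {d n k : ℕ} (hd : d ≠ 0) (h : d * k ≤ n) :
    HdTerm d n k * (k ! * d ^ k) = n.descFactorial (d * k) := by
  rw [HdTerm, mul_assoc, ← Nat.div_div_eq_div_mul, ← descFactorial_eq_div h]
  exact Nat.div_mul_cancel ((factorial_mul_pow_dvd_factorial_mul hd k).trans
    (factorial_dvd_descFactorial n (d * k)))

theorem dvd_HdTerm {m d n k : ℕ} (hd : d ≠ 0) (h : d * k ≤ n) (hmd : m.Coprime d)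
    (hdvd : m * k ! ∣ n.descFactorial (d * k)) : m ∣ HdTerm d n k := by
  rw [← HdTerm_mul_eq_descFactorial hd h, ← mul_assoc, mul_right_comm] at hdvd
  exact (hmd.pow_right k).dvd_of_dvd_mul_right
    (Nat.dvd_of_mul_dvd_mul_right k.factorial_pos hdvd)

theorem cast_Hd_eq_one_add_HdTerm_one {m d n : ℕ} (hd : d ≠ 0) (hdn : d ≤ n)
    (hvanish : ∀ k, 2 ≤ k → k ≤ n / d → m ∣ HdTerm d n k) :
    (Hd d n : ZMod m) = 1 + HdTerm d n 1 := by
  have hsplit : n / d + 1 = 2 + (n / d - 1) := by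
    have : 1 ≤ n / d := (Nat.one_le_div_iff (pos_of_ne_zero hd)).mpr hdn
    omega
  have htail : ((∑ k ∈ range (n / d - 1), HdTerm d n (2 + k) : ℕ) : ZMod m) = 0 :=
    (ZMod.natCast_eq_zero_iff _ _).mpr (dvd_sum fun k hk =>
      hvanish _ (by omega) (by simp only [mem_range] at hk; omega))
  rw [Hd_eq_sum_HdTerm, hsplit, sum_range_add, cast_add, htail]
  simp [sum_range_succ, HdTerm_zero]

theorem cast_Hd_of_coprime {m d n : ℕ} (hd : d ≠ 0) (hdn : d ≤ n) (hmd : m.Coprime d)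
    (hm : m ≤ n) (hnm : n - m < 2 * d) (hnd : n / d ≤ n - m) :
    (Hd d n : ZMod m) = 1 + HdTerm d n 1 :=
  cast_Hd_eq_one_add_HdTerm_one hd hdn fun k hk hkn =>
    dvd_HdTerm hd ((Nat.mul_le_mul_left d hkn).trans (Nat.mul_div_le n d)) hmd
      (mul_factorial_dvd_descFactorial hm (hkn.trans hnd)
        (by have := Nat.mul_le_mul_left d hk; omega))

theorem HdTerm_self_one {m r : ℕ} (hr : r < m) :
    HdTerm m (m + r) 1 = (m - 1).descFactorial (m - 1 - r) * (m + r).descFactorial r := by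
  obtain ⟨m, rfl⟩ : ∃ m', m = m' + 1 := ⟨m - 1, by omega⟩
  have hT := HdTerm_mul_eq_descFactorial m.succ_ne_zero (k := 1) (n := m + 1 + r) (by omega)
  rw [factorial_one, one_mul, pow_one, mul_one,
    ← descFactorial_mul_descFactorial (show r ≤ m + 1 by omega),
    show m + 1 + r - r = m + 1 by omega, show m + 1 - r = m - r + 1 by omega,
    succ_descFactorial_succ, mul_comm] at hT
  rw [mul_assoc] at hT
  rw [show m + 1 - 1 - r = m - r by omega, Nat.add_sub_cancel]
  exact Nat.eq_of_mul_eq_mul_left m.succ_pos hT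

theorem cast_HdTerm_self_one {m r : ℕ} (hr : r < m) :
    (HdTerm m (m + r) 1 : ZMod m) = (m - 1)! := by
  have hshift : ((m + r : ℕ) : ZMod m) = r := by simp
  rw [HdTerm_self_one hr, cast_mul, cast_descFactorial_eq_of_cast_eq hshift, descFactorial_self,
    ← cast_mul, ← factorial_mul_descFactorial (show m - 1 - r ≤ m - 1 by omega),
    show m - 1 - (m - 1 - r) = r by omega, mul_comm]

theorem cast_Hd_self {m n : ℕ} (hm : m ≤ n) (hn : n < 2 * m) :
    (Hd m n : ZMod m) = 1 + (m - 1)! := by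
  obtain ⟨r, rfl⟩ := Nat.exists_eq_add_of_le hm
  have hdiv : (m + r) / m = 1 := Nat.div_eq_of_lt_le (by omega) (by omega)
  rw [cast_Hd_eq_one_add_HdTerm_one (by omega) hm (fun k hk hkn => by omega),
    cast_HdTerm_self_one (by omega)]

theorem dvd_iff_intCast_dvd_of_natCast_eq_unit_mul {m H : ℕ} {X : ℤ} {u : ZMod m}
    (hu : IsUnit u) (h : (H : ZMod m) = u * X) : m ∣ H ↔ (m : ℤ) ∣ X := by
  rw [← ZMod.natCast_eq_zero_iff, ← ZMod.intCast_zmod_eq_zero_iff_dvd, h, hu.mul_right_eq_zero]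

theorem cast_two_mul_add_one_self (d : ℕ) : (2 * d + 1 : ZMod (2 * d + 1)) = 0 := by
  exact_mod_cast ZMod.natCast_self (2 * d + 1)

theorem coprime_two_mul_add_one (d : ℕ) : (2 * d + 1).Coprime d :=
  (coprime_mul_right_add_left 1 d 2).mpr (coprime_one_left d)

theorem isUnit_cast_zmod_two_mul_add_one (d : ℕ) : IsUnit (d : ZMod (2 * d + 1)) :=
  (ZMod.isUnit_iff_coprime d _).mpr (coprime_two_mul_add_one d).symm

theorem cast_factorial_two_mul (d : ℕ) :
    ((2 * d)! : ZMod (2 * d + 1)) = (-1) ^ d * (d ! : ZMod (2 * d + 1)) ^ 2 := by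
  have hdesc := ZMod.cast_descFactorial (p := 2 * d + 1) (show d ≤ 2 * d + 1 by omega)
  rw [Nat.add_sub_cancel] at hdesc
  rw [← factorial_mul_descFactorial (show d ≤ 2 * d by omega), show 2 * d - d = d by omega,
    cast_mul, hdesc]
  ring

theorem cast_HdTerm_three_mul_add_two {d : ℕ} (hd : d ≠ 0) :
    (HdTerm d (3 * d + 2) 1 : ZMod (2 * d + 1)) = -d ! := by
  have hT := HdTerm_mul_eq_descFactorial hd (k := 1) (n := 3 * d + 2) (by omega)
  have hshift : ((3 * d + 2 : ℕ) : ZMod (2 * d + 1)) = (d + 1 : ℕ) := by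
    push_cast; linear_combination cast_two_mul_add_one_self d
  have hdesc : (d + 1).descFactorial d = (d + 1) * d ! := by
    simpa [descFactorial_self] using succ_descFactorial d d
  apply_fun ((↑) : ℕ → ZMod (2 * d + 1)) at hT
  rw [mul_one, cast_descFactorial_eq_of_cast_eq hshift, hdesc] at hT
  apply (isUnit_cast_zmod_two_mul_add_one d).mul_left_cancel
  push_cast at hT
  linear_combination hT + (d ! : ZMod (2 * d + 1)) * cast_two_mul_add_one_self d

theorem cast_HdTerm_four_mul {d : ℕ} (hd : d ≠ 0) :
    (HdTerm d (4 * d) 1 : ZMod (2 * d + 1)) = -(-1) ^ d * d ! := by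
  have hT := HdTerm_mul_eq_descFactorial hd (k := 1) (n := 4 * d) (by omega)
  have hshift : ((4 * d : ℕ) : ZMod (2 * d + 1)) = -(2 : ℕ) := by
    push_cast; linear_combination 2 * cast_two_mul_add_one_self d
  have hasc : (2 : ℕ).ascFactorial d = (d + 1) * d ! := by
    simpa [add_comm, factorial_succ] using factorial_mul_ascFactorial 1 d
  apply_fun ((↑) : ℕ → ZMod (2 * d + 1)) at hT
  rw [mul_one, cast_descFactorial_eq_of_cast_eq_neg hshift, hasc] at hT
  apply (isUnit_cast_zmod_two_mul_add_one d).mul_left_cancel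
  push_cast at hT
  linear_combination hT + (-1) ^ d * (d ! : ZMod (2 * d + 1)) * cast_two_mul_add_one_self d

theorem cast_Hd_three_mul_add_two {d : ℕ} (hd : 3 ≤ d) :
    (Hd d (3 * d + 2) : ZMod (2 * d + 1)) = 1 - d ! := by
  have hdiv : (3 * d + 2) / d = 3 := Nat.div_eq_of_lt_le (by omega) (by omega)
  rw [cast_Hd_of_coprime (by omega) (by omega) (coprime_two_mul_add_one d) (by omega) (by omega)
    (by omega), cast_HdTerm_three_mul_add_two (by omega), sub_eq_add_neg]

theorem cast_Hd_four_mul {d : ℕ} (hd : 3 ≤ d) :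
    (Hd d (4 * d) : ZMod (2 * d + 1)) = 1 - (-1) ^ d * d ! := by
  have hdiv : 4 * d / d = 4 := Nat.mul_div_cancel _ (by omega)
  rw [cast_Hd_of_coprime (by omega) (by omega) (coprime_two_mul_add_one d) (by omega) (by omega)
    (by omega), cast_HdTerm_four_mul (by omega)]
  ring

theorem cast_Hd_two_mul_add_one {d n : ℕ} (h₁ : 2 * d + 1 ≤ n) (h₂ : n < 2 * (2 * d + 1)) :
    (Hd (2 * d + 1) n : ZMod (2 * d + 1)) = 1 + (-1) ^ d * (d ! : ZMod (2 * d + 1)) ^ 2 := by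
  rw [cast_Hd_self h₁ h₂, Nat.add_sub_cancel, cast_factorial_two_mul]

theorem stmt16 (d : ℕ) (hd : 3 ≤ d) :
    ((2 * d + 1) ∣ Hd d (3 * d + 2) ↔
      ((2 * d + 1 : ℤ)) ∣ ((d.factorial : ℤ) - 1)) ∧
    (Odd d →
      (((2 * d + 1) ∣ Hd (2 * d + 1) (3 * d + 2)) ↔
        ((2 * d + 1 : ℤ)) ∣ ((d.factorial : ℤ) ^ 2 - 1)) ∧
      (((2 * d + 1) ∣ Hd d (4 * d)) ↔
        ((2 * d + 1 : ℤ)) ∣ ((d.factorial : ℤ) + 1)) ∧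
      (((2 * d + 1) ∣ Hd (2 * d + 1) (4 * d)) ↔
        ((2 * d + 1 : ℤ)) ∣ ((d.factorial : ℤ) ^ 2 - 1))) := by
  have hneg : IsUnit (-1 : ZMod (2 * d + 1)) := isUnit_one.neg
  refine ⟨?_, fun hodd => ⟨?_, ?_, ?_⟩⟩
  · exact_mod_cast dvd_iff_intCast_dvd_of_natCast_eq_unit_mul hneg
      (by rw [cast_Hd_three_mul_add_two hd]; push_cast; ring)
  · exact_mod_cast dvd_iff_intCast_dvd_of_natCast_eq_unit_mul hneg
      (by rw [cast_Hd_two_mul_add_one (by omega) (by omega), hodd.neg_one_pow]; push_cast; ring)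
  · exact_mod_cast dvd_iff_intCast_dvd_of_natCast_eq_unit_mul (X := d ! + 1) isUnit_one
      (by rw [cast_Hd_four_mul hd, hodd.neg_one_pow]; push_cast; ring)
  · exact_mod_cast dvd_iff_intCast_dvd_of_natCast_eq_unit_mul hneg
      (by rw [cast_Hd_two_mul_add_one (by omega) (by omega), hodd.neg_one_pow]; push_cast; ring)
end

section
/- Let d ≥ 2 be an integer. Then for every n ∈ ℕ the following coefficientwise congruences hold in ℤ[x]: if d is a composite number greater than 4, then H_d(n,x) ≡ x^n (mod d); if d = 4 and n ≥ 4, then H_4(n,x) ≡ x^n + 2·⌊n/4⌋·x^{n−4} (mod 4); and if d is a prime number, then H_d(n,x) ≡ x^{n mod d}·(x−1)^{d·⌊n/d⌋} (mod d). -/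
open Polynomial

/-- `HP d n` is the polynomial `H_d(n,x) = Σ_{j=0}^{⌊n/d⌋} n!/((n−dj)!·j!·d^j)·x^{n−dj}`
(each coefficient is an integer, so the natural-number division below is exact). -/
noncomputable def HP (d n : ℕ) : Polynomial ℤ :=
  ∑ j ∈ Finset.range (n / d + 1),
    Polynomial.C ((Nat.factorial n / (Nat.factorial (n - d * j) * Nat.factorial j * d ^ j) : ℕ) : ℤ) *
      Polynomial.X ^ (n - d * j)

/-!
The coefficient `n!/((n-dj)! j! d^j)` equals `C(n,dj) · U_j(d) · ((d-1)!)^j`, where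
`U_j(d) = (dj)!/(j! d!^j)` counts the partitions of a `dj`-set into blocks of size `d`
(`Nat.uniformBell`). For composite `d > 4` we have `d ∣ (d-1)!`, so only the term `j = 0`
survives mod `d`; for `d = 4`, `4 ∣ 3!^2` leaves `j ∈ {0, 1}`, and `6·C(n,4) ≡ 2⌊n/4⌋ (mod 4)`
by Lucas. For a prime `p`, Lucas gives `C(n,pj) ≡ C(⌊n/p⌋,j)` and `U_j(p) ≡ 1`, Wilson gives
`(p-1)! ≡ -1`, and the resulting sum is `x^(n mod p) (x^p - 1)^⌊n/p⌋ = x^(n mod p) (x-1)^(p⌊n/p⌋)`.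
-/

open scoped Nat

lemma mul_dvd_factorial_of_lt {a b : ℕ} (ha : 0 < a) (hab : a < b) : a * b ∣ b ! := by
  rw [← Nat.mul_factorial_pred (by omega : b ≠ 0), mul_comm a b]
  exact mul_dvd_mul_left b (Nat.dvd_factorial ha (by omega))

lemma dvd_factorial_pred_of_not_prime {d : ℕ} (hnp : ¬ d.Prime) (h4 : 4 < d) : d ∣ (d - 1)! := by
  obtain ⟨a, ⟨b, rfl⟩, ha, hab⟩ := Nat.exists_dvd_of_not_prime2 (by omega) hnp
  rcases lt_trichotomy a b with h | rfl | h
  · exact (mul_dvd_factorial_of_lt (by omega) h).trans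
      (Nat.factorial_dvd_factorial (Nat.le_sub_one_of_lt (by nlinarith)))
  · -- a ≥ 3 here, so a and 2a are distinct factors below a²
    have ha3 : 3 ≤ a := by nlinarith
    calc a * a ∣ a * (2 * a) := mul_dvd_mul_left a (dvd_mul_left a 2)
      _ ∣ (2 * a)! := mul_dvd_factorial_of_lt (by omega) (by omega)
      _ ∣ (a * a - 1)! := Nat.factorial_dvd_factorial (Nat.le_sub_one_of_lt (by nlinarith))
  · rw [mul_comm]
    exact (mul_dvd_factorial_of_lt (by nlinarith) h).trans
      (Nat.factorial_dvd_factorial (Nat.le_sub_one_of_lt (mul_comm a b ▸ hab)))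

lemma factorial_div_eq_choose_mul_uniformBell {d n j : ℕ} (hd : d ≠ 0) (h : d * j ≤ n) :
    n ! / ((n - d * j)! * j ! * d ^ j) = n.choose (d * j) * j.uniformBell d * (d - 1)! ^ j := by
  refine Nat.div_eq_of_eq_mul_left (by positivity) ?_
  rw [← Nat.choose_mul_factorial_mul_factorial h, mul_comm d j, ← Nat.uniformBell_mul_eq j hd,
    ← Nat.mul_factorial_pred hd]
  ring

lemma map_HP {R : Type*} [CommRing R] {d : ℕ} (hd : d ≠ 0) (n : ℕ) :
    (HP d n).map (Int.castRingHom R) = ∑ j ∈ Finset.range (n / d + 1),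
      C ((n.choose (d * j) * j.uniformBell d * (d - 1)! ^ j : ℕ) : R) * X ^ (n - d * j) := by
  rw [HP, Polynomial.map_sum]
  refine Finset.sum_congr rfl fun j hj => ?_
  have hj : j * d ≤ n := Nat.mul_le_of_le_div d j n (Nat.lt_succ_iff.1 (Finset.mem_range.1 hj))
  rw [Polynomial.map_mul, Polynomial.map_pow, map_X, map_C, map_natCast,
    factorial_div_eq_choose_mul_uniformBell hd (by linarith)]

lemma map_HP_zmod_eq_sum_range {d k : ℕ} (hd : d ≠ 0) (n : ℕ) (hk : k ≤ n / d + 1)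
    (hdvd : d ∣ (d - 1)! ^ k) :
    (HP d n).map (Int.castRingHom (ZMod d)) = ∑ j ∈ Finset.range k,
      C ((n.choose (d * j) * j.uniformBell d * (d - 1)! ^ j : ℕ) : ZMod d) * X ^ (n - d * j) := by
  rw [map_HP hd]
  refine (Finset.sum_subset (Finset.range_subset_range.2 hk) fun j _ hj => ?_).symm
  have : d ∣ n.choose (d * j) * j.uniformBell d * (d - 1)! ^ j :=
    hdvd.trans ((pow_dvd_pow _ (by simpa using hj)).trans (dvd_mul_left _ _))
  rw [(ZMod.natCast_eq_zero_iff _ _).2 this, C_0, zero_mul]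

theorem map_HP_zmod_of_not_prime {d : ℕ} (hnp : ¬ d.Prime) (h4 : 4 < d) (n : ℕ) :
    (HP d n).map (Int.castRingHom (ZMod d)) = X ^ n := by
  rw [map_HP_zmod_eq_sum_range (k := 1) (by omega) n le_add_self
    (by simpa using dvd_factorial_pred_of_not_prime hnp h4)]
  simp [Nat.uniformBell_zero_left]

lemma choose_four_modEq_two (n : ℕ) : n.choose 4 ≡ n / 4 [MOD 2] := by
  have : Fact (Nat.Prime 2) := ⟨Nat.prime_two⟩
  have h1 := Choose.choose_modEq_choose_mod_mul_choose_div_nat (p := 2) (n := n) (k := 4)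
  have h2 := Choose.choose_modEq_choose_mod_mul_choose_div_nat (p := 2) (n := n / 2) (k := 2)
  rw [Nat.div_div_eq_div_mul] at h2
  norm_num at h1 h2
  exact h1.trans h2

theorem map_HP_four {n : ℕ} (hn : 4 ≤ n) :
    (HP 4 n).map (Int.castRingHom (ZMod 4)) =
      X ^ n + C ((2 * (n / 4) : ℕ) : ZMod 4) * X ^ (n - 4) := by
  rw [map_HP_zmod_eq_sum_range (k := 2) (by norm_num) n (by omega) (by decide)]
  have hcoeff : n.choose (4 * 1) * Nat.uniformBell 1 4 * (4 - 1)! ^ 1 ≡ 2 * (n / 4) [MOD 4] := by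
    have := choose_four_modEq_two n
    simp only [Nat.uniformBell_one_left, show (4 - 1)! ^ 1 = 6 from rfl, mul_one]
    unfold Nat.ModEq at *
    omega
  rw [Finset.sum_range_succ, Finset.sum_range_one, (ZMod.natCast_eq_natCast_iff _ _ _).2 hcoeff]
  simp [Nat.uniformBell_zero_left]

namespace ZMod

variable {p : ℕ} [Fact p.Prime]

lemma natCast_choose_mul_eq_choose_div (n j : ℕ) :
    (n.choose (p * j) : ZMod p) = ((n / p).choose j : ℕ) := by
  refine (ZMod.natCast_eq_natCast_iff _ _ _).2 ?_
  simpa [Nat.mul_div_cancel_left j (Fact.out : p.Prime).pos] using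
    Choose.choose_modEq_choose_mod_mul_choose_div_nat (p := p) (n := n) (k := p * j)

lemma natCast_uniformBell_eq_one (j : ℕ) : (j.uniformBell p : ZMod p) = 1 := by
  induction j with
  | zero => simp [Nat.uniformBell_zero_left]
  | succ m ih =>
    have hp : 0 < p := (Fact.out : p.Prime).pos
    rw [Nat.uniformBell_succ_left, Nat.cast_mul, ih, mul_one]
    have e : m * p + p - 1 = p * m + (p - 1) := by rw [mul_comm]; omega
    have hlt : p - 1 < p := by omega
    have h := Choose.choose_modEq_choose_mod_mul_choose_div_nat (p := p) (n := p * m + (p - 1))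
      (k := p - 1)
    rw [Nat.mul_add_mod, Nat.mul_add_div hp, Nat.mod_eq_of_lt hlt, Nat.div_eq_of_lt hlt] at h
    simpa [e] using (ZMod.natCast_eq_natCast_iff _ _ _).2 h

end ZMod

theorem map_HP_zmod_prime {p : ℕ} [Fact p.Prime] (n : ℕ) :
    (HP p n).map (Int.castRingHom (ZMod p)) = X ^ (n % p) * (X - 1) ^ (p * (n / p)) := by
  have hfrob : (X - 1 : (ZMod p)[X]) ^ p = -1 + X ^ p := by rw [sub_pow_char, one_pow]; ring
  rw [map_HP (Fact.out : p.Prime).ne_zero, pow_mul, hfrob, add_pow, Finset.mul_sum]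
  refine Finset.sum_congr rfl fun j hj => ?_
  have hj : j ≤ n / p := Nat.lt_succ_iff.1 (Finset.mem_range.1 hj)
  have hexp : n - p * j = n % p + p * (n / p - j) := by
    have := Nat.mod_add_div n p
    rw [Nat.mul_sub]
    have : p * j ≤ p * (n / p) := Nat.mul_le_mul_left p hj
    omega
  push_cast
  rw [ZMod.natCast_choose_mul_eq_choose_div, ZMod.natCast_uniformBell_eq_one, ZMod.wilsons_lemma,
    hexp, pow_add, pow_mul]
  simp only [map_mul, map_pow, map_neg, map_one, map_natCast]
  ring

theorem stmt18_general (d : ℕ) (n : ℕ) :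
    (¬ d.Prime → 4 < d →
      (HP d n).map (Int.castRingHom (ZMod d)) = Polynomial.X ^ n) ∧
    (d = 4 → 4 ≤ n →
      (HP 4 n).map (Int.castRingHom (ZMod 4)) =
        Polynomial.X ^ n + Polynomial.C ((2 * (n / 4) : ℕ) : ZMod 4) * Polynomial.X ^ (n - 4)) ∧
    (d.Prime →
      (HP d n).map (Int.castRingHom (ZMod d)) =
        Polynomial.X ^ (n % d) * (Polynomial.X - 1) ^ (d * (n / d))) := by
  refine ⟨fun hnp h4 => map_HP_zmod_of_not_prime hnp h4 n, ?_, fun hp => ?_⟩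
  · rintro rfl hn
    exact map_HP_four hn
  · have : Fact d.Prime := ⟨hp⟩
    exact map_HP_zmod_prime n

theorem stmt18 (d : ℕ) (hd : 2 ≤ d) (n : ℕ) :
    (¬ d.Prime → 4 < d →
      (HP d n).map (Int.castRingHom (ZMod d)) = Polynomial.X ^ n) ∧
    (d = 4 → 4 ≤ n →
      (HP 4 n).map (Int.castRingHom (ZMod 4)) =
        Polynomial.X ^ n + Polynomial.C ((2 * (n / 4) : ℕ) : ZMod 4) * Polynomial.X ^ (n - 4)) ∧
    (d.Prime →
      (HP d n).map (Int.castRingHom (ZMod d)) =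
        Polynomial.X ^ (n % d) * (Polynomial.X - 1) ^ (d * (n / d))) :=
  stmt18_general d n
end
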